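/- arXiv:1203.5739 — 5 statements merged into one kernel-verified Lean document; each statement's English description precedes it below -/
import Mathlib

section
/- Under the hodograph setup, for every x ∈ Ω with y = Y(x): (i) the Legendre transform q(y) := x·y − p(x) satisfies q(y) = ½(|y|² + v(y)²); (ii) (1 + |Dv(y)|²)^{1/2} = (1 − |Du(x)|²)^{−1/2} and u(x) = v(y)·(1 + |Dv(y)|²)^{1/2}; (iii) ∇q(y) = x and the Hessian of q at y is the inverse matrix of the Hessian of p at x. -/
open scoped BigOperators Classical
open Filter

noncomputable section

abbrev Euc (n : ℕ) := EuclideanSpace ℝ (Fin n)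

/-- Coordinates of the gradient `Du` of `u` at `x`. -/
def grad {n : ℕ} (u : Euc n → ℝ) (x : Euc n) : Fin n → ℝ :=
  fun i => fderiv ℝ u x (EuclideanSpace.single i 1)

/-- `|Du|²` at `x`. -/
def gradSq {n : ℕ} (u : Euc n → ℝ) (x : Euc n) : ℝ := ∑ i, (grad u x i) ^ 2

/-- The Hessian matrix `D²u(x)`. -/
def hess {n : ℕ} (u : Euc n → ℝ) (x : Euc n) : Matrix (Fin n) (Fin n) ℝ :=
  Matrix.of fun i j =>
    iteratedFDeriv ℝ 2 u x ![EuclideanSpace.single i 1, EuclideanSpace.single j 1]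

/-- `w = (1 − |Du|²)^{1/2}`. -/
def wF {n : ℕ} (u : Euc n → ℝ) (x : Euc n) : ℝ := Real.sqrt (1 - gradSq u x)

/-- `γ[u] = I + (Du)(Du)ᵀ/(w(1+w))`. -/
def gammaM {n : ℕ} (u : Euc n → ℝ) (x : Euc n) : Matrix (Fin n) (Fin n) ℝ :=
  1 + Matrix.of (fun i j => grad u x i * grad u x j / (wF u x * (1 + wF u x)))

/-- `A[u] = (1/w)(I − u·γ[u]·(D²u)·γ[u])`. -/
def AM {n : ℕ} (u : Euc n → ℝ) (x : Euc n) : Matrix (Fin n) (Fin n) ℝ :=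
  (wF u x)⁻¹ • (1 - u x • (gammaM u x * hess u x * gammaM u x))

/-- Eigenvalues of a real symmetric matrix; junk value `0` otherwise. -/
def eigs {n : ℕ} (A : Matrix (Fin n) (Fin n) ℝ) : Fin n → ℝ :=
  if h : A.IsHermitian then h.eigenvalues else 0

/-- The de Sitter principal curvatures `κ[u](x)`: the eigenvalues of `A[u](x)`. -/
def curv {n : ℕ} (u : Euc n → ℝ) (x : Euc n) : Fin n → ℝ := eigs (AM u x)

/-- `u` is admissible on `Ω`: `u > 0`, `|Du| < 1` and `A[u]` positive definite. -/
def Admissible {n : ℕ} (Ω : Set (Euc n)) (u : Euc n → ℝ) : Prop :=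
  ∀ x ∈ Ω, 0 < u x ∧ gradSq u x < 1 ∧ (AM u x).PosDef

/-- The open positive cone `K`. -/
def Kcone (n : ℕ) : Set (Fin n → ℝ) := {lam | ∀ i, 0 < lam i}

/-- `∂Ω` is a `C^∞` hypersurface. -/
def HasSmoothBoundary {n : ℕ} (Ω : Set (Euc n)) : Prop :=
  ∀ x ∈ frontier Ω, ∃ (U : Set (Euc n)) (ρ : Euc n → ℝ),
    IsOpen U ∧ x ∈ U ∧ ContDiff ℝ (⊤ : ℕ∞) ρ ∧ (∀ y ∈ U, fderiv ℝ ρ y ≠ 0) ∧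
    Ω ∩ U = {y ∈ U | ρ y < 0} ∧ frontier Ω ∩ U = {y ∈ U | ρ y = 0}

open scoped RealInnerProductSpace

/-!
The gradient of `p` is the hodograph map `Y`, and `D²p = DY` is invertible, so by the inverse
function theorem `Y` has a local inverse `g` near `Y x`. There `q = ⟪g, ·⟫ - p ∘ g`, whose
derivative collapses (the terms coming from `Dg` cancel because `∇p ∘ g = id`) to `∇q = g`;
hence `∇q (Y x) = x` and `D²q = Dg = (DY)⁻¹`. Part (i) is an algebraic identity. Writing
`q = (‖y‖² + v²)/2` near `Y x` and differentiating gives `x = ∇q = Y x + v ∇v`, i.e.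
`u ∇u = v ∇v = u w ∇v` with `w = √(1 - ‖∇u‖²)`, so `∇v = w⁻¹ ∇u` and `1 + ‖∇v‖² = w⁻²`.
-/

open InnerProductSpace Topology
open scoped Matrix

section InnerProductSpace

variable {F : Type*} [NormedAddCommGroup F] [InnerProductSpace ℝ F]

theorem legendre_transform_value (x a : F) (u : ℝ) (ha : ‖a‖ ≤ 1) :
    ⟪x, x - u • a⟫ - (⟪x, x⟫ - u ^ 2) / 2 = (‖x - u • a‖ ^ 2 + (u * √(1 - ‖a‖ ^ 2)) ^ 2) / 2 := by
  have hw : √(1 - ‖a‖ ^ 2) ^ 2 = 1 - ‖a‖ ^ 2 := Real.sq_sqrt (by nlinarith [norm_nonneg a])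
  rw [mul_pow, hw, norm_sub_sq_real, inner_sub_right, norm_smul, real_inner_smul_right,
    real_inner_self_eq_norm_sq, Real.norm_eq_abs, mul_pow, sq_abs]
  ring

theorem sqrt_one_add_norm_sq_of_smul_eq {a b : F} {u : ℝ} (hu : 0 < u) (ha : ‖a‖ < 1)
    (hab : u • a = (u * √(1 - ‖a‖ ^ 2)) • b) : √(1 + ‖b‖ ^ 2) = (√(1 - ‖a‖ ^ 2))⁻¹ := by
  set w := √(1 - ‖a‖ ^ 2)
  have hw2 : w ^ 2 = 1 - ‖a‖ ^ 2 := Real.sq_sqrt (by nlinarith [norm_nonneg a])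
  have hw : 0 < w := Real.sqrt_pos.2 (by nlinarith [norm_nonneg a])
  have hab' : a = w • b := smul_right_injective F hu.ne' (hab.trans (mul_smul _ _ _))
  have hb : b = w⁻¹ • a := by rw [hab', smul_smul, inv_mul_cancel₀ hw.ne', one_smul]
  have hsq : 1 + ‖b‖ ^ 2 = w⁻¹ ^ 2 := by
    rw [hb, norm_smul, Real.norm_of_nonneg (inv_nonneg.2 hw.le)]
    field_simp
    linarith
  rw [hsq, Real.sqrt_sq (inv_nonneg.2 hw.le)]

variable [CompleteSpace F]

theorem ContDiffOn.gradient_of_isOpen {f : F → ℝ} {s : Set F} {m k : WithTop ℕ∞}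
    (hf : ContDiffOn ℝ k f s) (hs : IsOpen s) (hmk : m + 1 ≤ k) :
    ContDiffOn ℝ m (gradient f) s :=
  (toDual ℝ F).symm.contDiff.comp_contDiffOn (hf.fderiv_of_isOpen hs hmk)

theorem HasGradientAt.half_inner_self_sub_sq {u : F → ℝ} {a x : F} (hu : HasGradientAt u a x) :
    HasGradientAt (fun z => (⟪z, z⟫ - u z ^ 2) / 2) (x - u x • a) x := by
  rw [hasGradientAt_iff_hasFDerivAt] at hu ⊢
  simp only [div_eq_mul_inv]
  refine ((((hasFDerivAt_id x).inner ℝ (hasFDerivAt_id x)).sub (hu.pow 2)).mul_const 2⁻¹)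
    |>.congr_fderiv (ContinuousLinearMap.ext fun h => ?_)
  simp only [sub_apply, smul_apply,
    ContinuousLinearMap.comp_apply, ContinuousLinearMap.prod_apply, ContinuousLinearMap.id_apply,
    fderivInnerCLM_apply, toDual_apply_apply, real_inner_comm h x, inner_sub_left,
    real_inner_smul_left, smul_eq_mul, id_eq]
  ring

theorem HasGradientAt.half_norm_sq_add_sq {v : F → ℝ} {b y : F} (hv : HasGradientAt v b y) :
    HasGradientAt (fun z => (‖z‖ ^ 2 + v z ^ 2) / 2) (y + v y • b) y := by
  rw [hasGradientAt_iff_hasFDerivAt] at hv ⊢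
  simp only [div_eq_mul_inv]
  refine (((hasFDerivAt_id y).norm_sq.add (hv.pow 2)).mul_const 2⁻¹)
    |>.congr_fderiv (ContinuousLinearMap.ext fun h => ?_)
  simp only [add_apply, smul_apply,
    ContinuousLinearMap.comp_apply, ContinuousLinearMap.id_apply, coe_innerSL_apply,
    toDual_apply_apply, inner_add_left, real_inner_smul_left, smul_eq_mul, id_eq]
  ring

theorem hasGradientAt_legendre {p : F → ℝ} {g : F → F} {g' : F →L[ℝ] F} {y : F}
    (hg : HasFDerivAt g g' y) (hp : HasGradientAt p y (g y)) :
    HasGradientAt (fun z => ⟪g z, z⟫ - p (g z)) (g y) y := by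
  rw [hasGradientAt_iff_hasFDerivAt] at hp ⊢
  refine ((hg.inner ℝ (hasFDerivAt_id y)).sub (hp.comp y hg))
    |>.congr_fderiv (ContinuousLinearMap.ext fun h => ?_)
  simp [real_inner_comm y]

theorem hodograph_gradient_relations {q v : F → ℝ} {x y a : F} {u : ℝ}
    (hu : 0 < u) (ha : ‖a‖ < 1) (hy : y = x - u • a) (hvy : v y = u * √(1 - ‖a‖ ^ 2))
    (hq : HasGradientAt q x y) (hqv : q =ᶠ[𝓝 y] fun z => (‖z‖ ^ 2 + v z ^ 2) / 2)
    (hv : DifferentiableAt ℝ v y) :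
    √(1 + ‖gradient v y‖ ^ 2) = (√(1 - ‖a‖ ^ 2))⁻¹ ∧ u = v y * √(1 + ‖gradient v y‖ ^ 2) := by
  have hxy : x = y + v y • gradient v y :=
    hq.unique (hv.hasGradientAt.half_norm_sq_add_sq.congr_of_eventuallyEq hqv)
  have hsmul : u • a = v y • gradient v y := by
    rw [← sub_eq_of_eq_add' hxy, hy, sub_sub_cancel]
  have hsqrt := sqrt_one_add_norm_sq_of_smul_eq hu ha (hvy ▸ hsmul)
  have hw : 0 < √(1 - ‖a‖ ^ 2) := Real.sqrt_pos.2 (by nlinarith [norm_nonneg a])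
  exact ⟨hsqrt, by rw [hsqrt, hvy, mul_inv_cancel_right₀ hw.ne']⟩

end InnerProductSpace

section LocalInverse

variable {α β : Type*} {Y : α → β} {g : β → α} {Ω : Set α}

theorem Filter.Eventually.of_forall_rightInverse {P : α → β → Prop} {l : Filter β}
    (hP : ∀ z ∈ Ω, P z (Y z)) (hg : ∀ᶠ y in l, g y ∈ Ω ∧ Y (g y) = y) :
    ∀ᶠ y in l, P (g y) y :=
  hg.mono fun y ⟨hy, hYy⟩ => (congrArg (P (g y)) hYy).mp (hP _ hy)

theorem ContDiffAt.exists_localInverse {E : Type*} [NormedAddCommGroup E] [NormedSpace ℝ E]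
    [CompleteSpace E] {Y : E → E} {A : E ≃L[ℝ] E} {Ω : Set E} {x : E}
    (hΩ : Ω ∈ 𝓝 x) (hY : ContDiffAt ℝ 1 Y x) (hA : HasFDerivAt Y (A : E →L[ℝ] E) x) :
    ∃ g : E → E, g (Y x) = x ∧ HasFDerivAt g (A.symm : E →L[ℝ] E) (Y x) ∧
      (∀ᶠ y in 𝓝 (Y x), g y ∈ Ω ∧ Y (g y) = y) ∧ ∀ᶠ y in 𝓝 (Y x), DifferentiableAt ℝ g y := by
  have hstrict := hY.hasStrictFDerivAt' hA one_ne_zero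
  have hgx : hY.localInverse hA one_ne_zero (Y x) = x := hY.localInverse_apply_image hA one_ne_zero
  have hg : ContDiffAt ℝ 1 (hY.localInverse hA one_ne_zero) (Y x) :=
    hY.to_localInverse hA one_ne_zero
  refine ⟨hY.localInverse hA one_ne_zero, hgx, hstrict.to_localInverse.hasFDerivAt, ?_,
    (hg.eventually (by simp)).mono fun y hy => hy.differentiableAt one_ne_zero⟩
  exact Filter.Eventually.and (hg.continuousAt.preimage_mem_nhds (by rwa [hgx]))
    hstrict.eventually_right_inverse

theorem differentiableAt_of_eq_comp_localInverse {E G : Type*} [NormedAddCommGroup E]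
    [NormedSpace ℝ E] [NormedAddCommGroup G] [NormedSpace ℝ G] {Y g : E → E} {Ω : Set E}
    {v W : E → G} {x : E} (hv : ∀ z ∈ Ω, v (Y z) = W z) (hW : DifferentiableAt ℝ W x)
    (hgx : g (Y x) = x) (hgd : DifferentiableAt ℝ g (Y x))
    (hg : ∀ᶠ y in 𝓝 (Y x), g y ∈ Ω ∧ Y (g y) = y) : DifferentiableAt ℝ v (Y x) :=
  ((hgx ▸ hW).comp (Y x) hgd).congr_of_eventuallyEq
    (hg.of_forall_rightInverse (P := fun z y => v y = W z) hv)

theorem eventually_hasGradientAt_legendre {F : Type*} [NormedAddCommGroup F]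
    [InnerProductSpace ℝ F] [CompleteSpace F] {p q : F → ℝ} {Y g : F → F} {Ω : Set F} {y₀ : F}
    (hp : ∀ x ∈ Ω, HasGradientAt p (Y x) x) (hq : ∀ x ∈ Ω, q (Y x) = ⟪x, Y x⟫ - p x)
    (hg : ∀ᶠ y in 𝓝 y₀, g y ∈ Ω ∧ Y (g y) = y) (hgd : ∀ᶠ y in 𝓝 y₀, DifferentiableAt ℝ g y) :
    ∀ᶠ y in 𝓝 y₀, HasGradientAt q (g y) y := by
  filter_upwards [hg.eventually_nhds, hgd] with y hy hgy
  have hqg : q =ᶠ[𝓝 y] fun z => ⟪g z, z⟫ - p (g z) :=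
    hy.of_forall_rightInverse (P := fun z y => q y = ⟪z, y⟫ - p z) hq
  obtain ⟨hgyΩ, hYgy⟩ := hy.self_of_nhds
  have hpg : HasGradientAt p y (g y) := by simpa only [hYgy] using hp _ hgyΩ
  exact (hasGradientAt_legendre hgy.hasFDerivAt hpg).congr_of_eventuallyEq hqg

end LocalInverse

theorem Matrix.inv_transpose_toMatrix_linearEquiv {R M ι : Type*} [CommRing R] [AddCommGroup M]
    [Module R M] [Fintype ι] [DecidableEq ι] (b : Module.Basis ι R M) (e : M ≃ₗ[R] M) :
    (LinearMap.toMatrix b b e)ᵀ⁻¹ = (LinearMap.toMatrix b b e.symm)ᵀ := by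
  refine Matrix.inv_eq_right_inv ?_
  rw [← Matrix.transpose_mul, ← LinearMap.toMatrix_comp]
  simp

theorem ContinuousLinearMap.exists_equiv_of_isUnit_toMatrix {E ι : Type*} [NormedAddCommGroup E]
    [NormedSpace ℝ E] [FiniteDimensional ℝ E] [Fintype ι] [DecidableEq ι]
    (b : Module.Basis ι ℝ E) {A : E →L[ℝ] E} (hA : IsUnit (LinearMap.toMatrix b b A)) :
    ∃ e : E ≃L[ℝ] E, (e : E →L[ℝ] E) = A :=
  ⟨(LinearEquiv.ofIsUnitDet (v := b) (v' := b)
    (IsUnit.map Matrix.detMonoidHom hA)).toContinuousLinearEquiv, rfl⟩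

section Hessian

variable {n : ℕ}

theorem hess_eq_transpose_toMatrix {f : Euc n → ℝ} {G : Euc n → Euc n} {L : Euc n →L[ℝ] Euc n}
    {x : Euc n} (hf : ∀ᶠ z in 𝓝 x, HasGradientAt f (G z) z) (hG : HasFDerivAt G L x) :
    hess f x = (LinearMap.toMatrix (PiLp.basisFun 2 ℝ (Fin n)) (PiLp.basisFun 2 ℝ (Fin n)) L)ᵀ := by
  have hDf : fderiv ℝ f =ᶠ[𝓝 x] fun z => innerSL ℝ (G z) :=
    hf.mono fun z hz => (hasGradientAt_iff_hasFDerivAt.1 hz).fderiv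
  have hD2f : fderiv ℝ (fderiv ℝ f) x = (innerSL ℝ : Euc n →L[ℝ] Euc n →L[ℝ] ℝ).comp L :=
    hDf.fderiv_eq.trans ((innerSL ℝ : Euc n →L[ℝ] Euc n →L[ℝ] ℝ).hasFDerivAt.comp x hG).fderiv
  ext i j
  simp [hess, iteratedFDeriv_two_apply, hD2f, LinearMap.toMatrix_apply,
    EuclideanSpace.inner_single_right]

theorem exists_equiv_hasFDerivAt_of_posDef_hess {f : Euc n → ℝ} {G : Euc n → Euc n} {x : Euc n}
    (hf : ∀ᶠ z in 𝓝 x, HasGradientAt f (G z) z) (hG : DifferentiableAt ℝ G x)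
    (hpos : (hess f x).PosDef) :
    ∃ A : Euc n ≃L[ℝ] Euc n, HasFDerivAt G (A : Euc n →L[ℝ] Euc n) x ∧
      hess f x = (LinearMap.toMatrix (PiLp.basisFun 2 ℝ (Fin n)) (PiLp.basisFun 2 ℝ (Fin n))
        (A : Euc n →L[ℝ] Euc n))ᵀ := by
  have hfG := hess_eq_transpose_toMatrix hf hG.hasFDerivAt
  obtain ⟨A, hA⟩ := ContinuousLinearMap.exists_equiv_of_isUnit_toMatrix _
    ((Matrix.isUnit_transpose _).1 (hfG ▸ hpos.isUnit))
  exact ⟨A, hA ▸ hG.hasFDerivAt, hA ▸ hfG⟩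

end Hessian

theorem legendre_transform_identities_general
    (n : ℕ) (Ω : Set (Euc n)) (hΩ : IsOpen Ω)
    (u : Euc n → ℝ) (hu : ContDiffOn ℝ (⊤ : ℕ∞) u Ω)
    (hupos : ∀ x ∈ Ω, 0 < u x)
    (hspace : ∀ x ∈ Ω, ‖gradient u x‖ < 1)
    (p : Euc n → ℝ) (hp : ∀ x, p x = (⟪x, x⟫ - (u x) ^ 2) / 2)
    (hconv : ∀ x ∈ Ω, (hess p x).PosDef)
    (Y : Euc n → Euc n) (hY : ∀ x, Y x = x - u x • gradient u x)
    (v : Euc n → ℝ)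
    (hv : ∀ x ∈ Ω, v (Y x) = u x * Real.sqrt (1 - ‖gradient u x‖ ^ 2))
    (q : Euc n → ℝ) (hq : ∀ x ∈ Ω, q (Y x) = ⟪x, Y x⟫ - p x) :
    ∀ x ∈ Ω,
      q (Y x) = (‖Y x‖ ^ 2 + (v (Y x)) ^ 2) / 2 ∧
      Real.sqrt (1 + ‖gradient v (Y x)‖ ^ 2)
        = (Real.sqrt (1 - ‖gradient u x‖ ^ 2))⁻¹ ∧
      u x = v (Y x) * Real.sqrt (1 + ‖gradient v (Y x)‖ ^ 2) ∧
      gradient q (Y x) = x ∧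
      hess q (Y x) = (hess p x)⁻¹ := by
  have hgu : ContDiffOn ℝ (⊤ : ℕ∞) (gradient u) Ω := hu.gradient_of_isOpen hΩ (by simp)
  have hYs : ContDiffOn ℝ (⊤ : ℕ∞) Y Ω :=
    (contDiffOn_id.sub (hu.smul hgu)).congr fun z _ => hY z
  have hpY : ∀ z ∈ Ω, HasGradientAt p (Y z) z := fun z hz => by
    rw [hY, show p = _ from funext hp]
    exact ((hu.contDiffAt (hΩ.mem_nhds hz)).differentiableAt (by simp)).hasGradientAt
      |>.half_inner_self_sub_sq
  have hqY : ∀ z ∈ Ω, q (Y z) = (‖Y z‖ ^ 2 + v (Y z) ^ 2) / 2 := fun z hz => by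
    rw [hq z hz, hv z hz, hp, hY, legendre_transform_value _ _ _ (hspace z hz).le]
  intro x hx
  have hxΩ : Ω ∈ 𝓝 x := hΩ.mem_nhds hx
  have hYx : ContDiffAt ℝ (⊤ : ℕ∞) Y x := hYs.contDiffAt hxΩ
  obtain ⟨A, hDY, hpA⟩ := exists_equiv_hasFDerivAt_of_posDef_hess (eventually_of_mem hxΩ hpY)
    (hYx.differentiableAt (by simp)) (hconv x hx)
  obtain ⟨g, hgx, hgA, hg, hgd⟩ := (hYx.of_le (by simp)).exists_localInverse hxΩ hDY
  have hqg := eventually_hasGradientAt_legendre hpY hq hg hgd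
  have hqx : HasGradientAt q x (Y x) := by simpa only [hgx] using hqg.self_of_nhds
  have hW : DifferentiableAt ℝ (fun z => u z * √(1 - ‖gradient u z‖ ^ 2)) x :=
    ((hu.contDiffAt hxΩ).differentiableAt (by simp)).mul
      (((((hgu.contDiffAt hxΩ).differentiableAt (by simp)).norm_sq ℝ).const_sub 1).sqrt
        (by nlinarith [hspace x hx, norm_nonneg (gradient u x)]))
  have hvx := differentiableAt_of_eq_comp_localInverse hv hW hgx hgA.differentiableAt hg
  obtain ⟨hsqrt, hux⟩ := hodograph_gradient_relations (hupos x hx) (hspace x hx) (hY x) (hv x hx)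
    hqx (hg.of_forall_rightInverse (P := fun _ y => q y = (‖y‖ ^ 2 + v y ^ 2) / 2) hqY) hvx
  refine ⟨hqY x hx, hsqrt, hux, hqx.gradient, ?_⟩
  rw [hess_eq_transpose_toMatrix hqg hgA, hpA]
  exact (Matrix.inv_transpose_toMatrix_linearEquiv _ A.toLinearEquiv).symm

/-- Lemma 2.1: the Legendre transform of `p = ½(|x|² − u²)` under the
hodograph map `Y = ∇p = x − u Du` is `q(y) = ½(|y|² + v(y)²)` where
`v(Y x) = u·(1 − |Du|²)^{1/2}`; moreover `∇q(Y x) = x` and `D²q(Y x) = (D²p(x))⁻¹`. -/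
theorem legendre_transform_identities
    (n : ℕ) (Ω : Set (Euc n)) (hΩ : IsOpen Ω)
    (u : Euc n → ℝ) (hu : ContDiffOn ℝ (⊤ : ℕ∞) u Ω)
    (hupos : ∀ x ∈ Ω, 0 < u x)
    (hspace : ∀ x ∈ Ω, ‖gradient u x‖ < 1)
    (p : Euc n → ℝ) (hp : ∀ x, p x = (⟪x, x⟫ - (u x) ^ 2) / 2)
    (hconv : ∀ x ∈ Ω, (hess p x).PosDef)
    (Y : Euc n → Euc n) (hY : ∀ x, Y x = x - u x • gradient u x)
    (hinj : Set.InjOn Y Ω) (hopen : IsOpen (Y '' Ω))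
    (v : Euc n → ℝ)
    (hv : ∀ x ∈ Ω, v (Y x) = u x * Real.sqrt (1 - ‖gradient u x‖ ^ 2))
    (q : Euc n → ℝ) (hq : ∀ x ∈ Ω, q (Y x) = ⟪x, Y x⟫ - p x) :
    ∀ x ∈ Ω,
      q (Y x) = (‖Y x‖ ^ 2 + (v (Y x)) ^ 2) / 2 ∧
      Real.sqrt (1 + ‖gradient v (Y x)‖ ^ 2)
        = (Real.sqrt (1 - ‖gradient u x‖ ^ 2))⁻¹ ∧
      u x = v (Y x) * Real.sqrt (1 + ‖gradient v (Y x)‖ ^ 2) ∧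
      gradient q (Y x) = x ∧
      hess q (Y x) = (hess p x)⁻¹ :=
  legendre_transform_identities_general n Ω hΩ u hu hupos hspace p hp hconv Y hY v hv q hq
end
end

section
/- Let n ≥ 1 and let K = {λ ∈ ℝⁿ : λᵢ > 0 for all i}. Suppose f : K → ℝ is differentiable, concave on K, positively homogeneous of degree one, and f(1,…,1) = 1. Then Σᵢ ∂f/∂λᵢ(λ) ≥ 1 for every λ ∈ K. -/
/-!
Euler's relation gives `Df(λ) λ = f(λ)`, and concavity puts the graph of `f` below its tangent
plane at `λ`, so `1 = f(1,…,1) ≤ f(λ) + Df(λ)((1,…,1) - λ) = Df(λ)(1,…,1) = Σᵢ ∂f/∂λᵢ(λ)`.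
-/

open scoped BigOperators

noncomputable section

open Filter Topology

section

variable {E : Type*} [NormedAddCommGroup E] [NormedSpace ℝ E] {f : E → ℝ} {s : Set E} {x y : E}

theorem fderiv_apply_self_of_pos_homogeneous (hf : DifferentiableAt ℝ f x)
    (hhom : ∀ t > (0 : ℝ), f (t • x) = t * f x) : fderiv ℝ f x x = f x := by
  have hline : HasDerivAt (fun t : ℝ => f (x + t • x)) (fderiv ℝ f x x) 0 :=
    hf.hasFDerivAt.hasLineDerivAt x
  have hscaled : (fun t : ℝ => f (x + t • x)) =ᶠ[𝓝 0] fun t => (1 + t) * f x := by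
    filter_upwards [lt_mem_nhds (show (-1 : ℝ) < 0 by norm_num)] with t ht
    rw [← hhom (1 + t) (by linarith), add_smul, one_smul]
  have hlin : HasDerivAt (fun t : ℝ => (1 + t) * f x) (f x) 0 := by
    simpa using ((hasDerivAt_id (0 : ℝ)).const_add 1).mul_const (f x)
  exact hline.unique (hlin.congr_of_eventuallyEq hscaled)

theorem ConcaveOn.le_add_fderiv_sub (hf : ConcaveOn ℝ s f) (hx : x ∈ s) (hy : y ∈ s)
    (hfx : DifferentiableAt ℝ f x) : f y ≤ f x + fderiv ℝ f x (y - x) := by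
  set g : ℝ → ℝ := fun t => f (x + t • (y - x))
  have hg : ConcaveOn ℝ (AffineMap.lineMap x y ⁻¹' s) g := by
    have hg_eq : g = f ∘ AffineMap.lineMap x y := by
      ext t
      simp [g, AffineMap.lineMap_apply, add_comm]
    exact hg_eq ▸ hf.comp_affineMap (AffineMap.lineMap x y)
  have hderiv : HasDerivAt g (fderiv ℝ f x (y - x)) 0 :=
    hfx.hasFDerivAt.hasLineDerivAt (y - x)
  calc f y = f x + slope g 0 1 := by simp [g, slope_def_field]
    _ ≤ f x + fderiv ℝ f x (y - x) := by
      gcongr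
      exact hg.slope_le_of_hasDerivAt (by simpa using hx) (by simpa using hy) zero_lt_one hderiv

end

theorem sum_partials_ge_one_general
    (n : ℕ) (f : (Fin n → ℝ) → ℝ)
    (hdiff : ∀ lam ∈ Kcone n, DifferentiableAt ℝ f lam)
    (hconc : ConcaveOn ℝ (Kcone n) f)
    (hhom : ∀ t > (0 : ℝ), ∀ lam ∈ Kcone n, f (t • lam) = t * f lam)
    (hnorm : f (fun _ => 1) = 1) :
    ∀ lam ∈ Kcone n, 1 ≤ ∑ i, fderiv ℝ f lam (Pi.single i 1) := by
  intro lam hlam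
  have hone : (fun _ => 1) ∈ Kcone n := fun _ => one_pos
  have heuler := fderiv_apply_self_of_pos_homogeneous (hdiff lam hlam) (hhom · · lam hlam)
  have htangent := hconc.le_add_fderiv_sub hlam hone (hdiff lam hlam)
  calc (1 : ℝ) = f (fun _ => 1) := hnorm.symm
    _ ≤ f lam + fderiv ℝ f lam ((fun _ => 1) - lam) := htangent
    _ = fderiv ℝ f lam (fun _ => 1) := by rw [map_sub, heuler, add_sub_cancel]
    _ = ∑ i, fderiv ℝ f lam (Pi.single i 1) := by
      rw [← map_sum, Finset.univ_sum_single (fun _ : Fin n => (1 : ℝ))]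

/-- inequality (1.17): for a concave, degree-one homogeneous
normalized curvature function, `Σᵢ ∂f/∂λᵢ ≥ 1` on `K`. -/
theorem sum_partials_ge_one
    (n : ℕ) (hn : 1 ≤ n) (f : (Fin n → ℝ) → ℝ)
    (hdiff : ∀ lam ∈ Kcone n, DifferentiableAt ℝ f lam)
    (hconc : ConcaveOn ℝ (Kcone n) f)
    (hhom : ∀ t > (0 : ℝ), ∀ lam ∈ Kcone n, f (t • lam) = t * f lam)
    (hnorm : f (fun _ => 1) = 1) :
    ∀ lam ∈ Kcone n, 1 ≤ ∑ i, fderiv ℝ f lam (Pi.single i 1) :=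
  sum_partials_ge_one_general n f hdiff hconc hhom hnorm

end
end

section
/- Let n ≥ 1 and let K = {λ ∈ ℝⁿ : λᵢ > 0 for all i}. Suppose f : K → ℝ is differentiable, positive on K, positively homogeneous of degree one, f(1,…,1) = 1, and the dual function f*(λ) := (f(1/λ₁,…,1/λₙ))^{−1} is concave on K. Then Σᵢ λᵢ² ∂f/∂λᵢ(λ) ≥ f(λ)² for every λ ∈ K. -/
/-!
A concave, positively homogeneous function `g` lies below each of its tangent hyperplanes, and
by Euler's identity these pass through the origin: `g μ ≤ Dg(ν) μ`. Apply this to the dual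
function `f*` at `ν = 1/λ`, `μ = 1`. Then `f*(1) = 1`, and the chain rule through the two
inversions gives `Df*(1/λ) 1 = f(λ)⁻² · Df(λ)(λ²)`.
-/

open scoped BigOperators

noncomputable section

open Set

section Concave

variable {E : Type*} [NormedAddCommGroup E] [NormedSpace ℝ E] {s : Set E} {g : E → ℝ}
  {g' : E →L[ℝ] ℝ} {x y : E}

theorem ConcaveOn.le_add_fderiv (hg : ConcaveOn ℝ s g) (hx : x ∈ s) (hy : y ∈ s)
    (hg' : HasFDerivAt g g' x) : g y ≤ g x + g' (y - x) := by
  set φ : ℝ →ᵃ[ℝ] E := AffineMap.lineMap x y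
  have hline : ConcaveOn ℝ (φ ⁻¹' s) (g ∘ φ) := hg.comp_affineMap φ
  have hderiv : HasDerivAt (g ∘ φ) (g' (y - x)) 0 :=
    (by simpa [φ] using hg' : HasFDerivAt g g' (φ 0)).comp_hasDerivAt 0
      AffineMap.hasDerivAt_lineMap
  have hslope :=
    hline.slope_le_of_hasDerivAt (x := 0) (y := 1) (by simpa [φ]) (by simpa [φ]) one_pos hderiv
  simpa [φ, slope, map_sub, add_comm] using hslope

theorem HasFDerivAt.apply_self_of_homogeneous {F : Type*} [NormedAddCommGroup F]
    [NormedSpace ℝ F] {f : E → F} {f' : E →L[ℝ] F} (hf : HasFDerivAt f f' x)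
    (hhom : ∀ t > (0 : ℝ), f (t • x) = t • f x) : f' x = f x := by
  have hray : HasDerivAt (fun t : ℝ => f (t • x)) (f' x) 1 :=
    (by simpa using hf : HasFDerivAt f f' ((1 : ℝ) • x)).comp_hasDerivAt 1
      (by simpa using (hasDerivAt_id (1 : ℝ)).smul_const x)
  have hlin : HasDerivAt (fun t : ℝ => t • f x) (f x) 1 := by
    simpa using (hasDerivAt_id (1 : ℝ)).smul_const (f x)
  refine hray.unique (hlin.congr_of_eventuallyEq ?_)
  filter_upwards [Ioi_mem_nhds one_pos] with t ht using hhom t ht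

theorem ConcaveOn.le_fderiv_of_homogeneous (hg : ConcaveOn ℝ s g) (hx : x ∈ s) (hy : y ∈ s)
    (hg' : HasFDerivAt g g' x) (hhom : ∀ t > (0 : ℝ), g (t • x) = t * g x) : g y ≤ g' y := by
  have hsupport := hg.le_add_fderiv hx hy hg'
  have heuler := hg'.apply_self_of_homogeneous hhom
  rw [map_sub, heuler] at hsupport
  linarith

end Concave

section Dual

variable {ι : Type*}

theorem hasFDerivAt_pi_inv [Fintype ι] {x : ι → ℝ} (hx : ∀ i, x i ≠ 0) :
    HasFDerivAt (fun y : ι → ℝ => y⁻¹) (-ContinuousLinearMap.mul ℝ (ι → ℝ) (x ^ 2)⁻¹) x := by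
  refine hasFDerivAt_pi'.mpr fun i => ?_
  refine ((hasDerivAt_inv (hx i)).comp_hasFDerivAt x
    (hasFDerivAt_apply (𝕜 := ℝ) i x)).congr_fderiv ?_
  ext v
  simp

def dualFun (f : (ι → ℝ) → ℝ) (lam : ι → ℝ) : ℝ := (f lam⁻¹)⁻¹

variable {f : (ι → ℝ) → ℝ} {lam : ι → ℝ}

theorem dualFun_smul (hhom : ∀ t > (0 : ℝ), f (t • lam⁻¹) = t * f lam⁻¹) {t : ℝ} (ht : 0 < t) :
    dualFun f (t • lam) = t * dualFun f lam := by
  have hinv : (t • lam)⁻¹ = t⁻¹ • lam⁻¹ := by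
    funext i
    simp [mul_comm]
  rw [dualFun, dualFun, hinv, hhom _ (inv_pos.mpr ht), mul_inv, inv_inv]

theorem hasFDerivAt_dualFun [Fintype ι] {f' : (ι → ℝ) →L[ℝ] ℝ} (hf : HasFDerivAt f f' lam⁻¹)
    (hlam : ∀ i, lam i ≠ 0) (hflam : f lam⁻¹ ≠ 0) :
    HasFDerivAt (dualFun f)
      ((f lam⁻¹ ^ 2)⁻¹ • f'.comp (ContinuousLinearMap.mul ℝ (ι → ℝ) (lam ^ 2)⁻¹)) lam := by
  refine ((hasDerivAt_inv hflam).comp_hasFDerivAt lam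
    (hf.comp lam (hasFDerivAt_pi_inv hlam))).congr_fderiv ?_
  ext v
  simp

end Dual

theorem sum_sq_partials_ge_f_sq_general
    (n : ℕ) (f : (Fin n → ℝ) → ℝ)
    (hdiff : ∀ lam ∈ Kcone n, DifferentiableAt ℝ f lam)
    (hpos : ∀ lam ∈ Kcone n, 0 < f lam)
    (hhom : ∀ t > (0 : ℝ), ∀ lam ∈ Kcone n, f (t • lam) = t * f lam)
    (hnorm : f (fun _ => 1) = 1)
    (hdualconc : ConcaveOn ℝ (Kcone n) (fun lam => (f fun i => (lam i)⁻¹)⁻¹)) :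
    ∀ lam ∈ Kcone n,
      (f lam) ^ 2 ≤ ∑ i, (lam i) ^ 2 * fderiv ℝ f lam (Pi.single i 1) := by
  intro lam hlam
  have hinv : lam⁻¹ ∈ Kcone n := fun i => inv_pos.mpr (hlam i)
  have hdual := hasFDerivAt_dualFun (by simpa using (hdiff lam hlam).hasFDerivAt)
    (fun i => (hinv i).ne') (by simpa using (hpos lam hlam).ne')
  have hone : (1 : Fin n → ℝ) ∈ Kcone n := fun _ => one_pos
  have htangent := ConcaveOn.le_fderiv_of_homogeneous (g := dualFun f) hdualconc hinv hone hdual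
    fun t ht => dualFun_smul (by simpa using fun t ht => hhom t ht lam hlam) ht
  have hdual_one : dualFun f 1 = 1 := by rw [dualFun, inv_one, inv_eq_one]; exact hnorm
  simp only [hdual_one, inv_inv, inv_pow, smul_apply, ContinuousLinearMap.comp_apply,
    ContinuousLinearMap.mul_apply', mul_one, smul_eq_mul] at htangent
  calc f lam ^ 2 ≤ fderiv ℝ f lam (lam ^ 2) :=
        (one_le_inv_mul₀ (pow_pos (hpos lam hlam) 2)).mp htangent
    _ = ∑ i, lam i ^ 2 * fderiv ℝ f lam (Pi.single i 1) := by
        conv_lhs => rw [pi_eq_sum_univ' (lam ^ 2)]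
        simp [map_sum, map_smul]

/-- inequality (1.18): if the dual function
`f*(λ) = (f(1/λ))⁻¹` is concave, then `Σᵢ λᵢ² ∂f/∂λᵢ(λ) ≥ f(λ)²` on `K`. -/
theorem sum_sq_partials_ge_f_sq
    (n : ℕ) (hn : 1 ≤ n) (f : (Fin n → ℝ) → ℝ)
    (hdiff : ∀ lam ∈ Kcone n, DifferentiableAt ℝ f lam)
    (hpos : ∀ lam ∈ Kcone n, 0 < f lam)
    (hhom : ∀ t > (0 : ℝ), ∀ lam ∈ Kcone n, f (t • lam) = t * f lam)
    (hnorm : f (fun _ => 1) = 1)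
    (hdualconc : ConcaveOn ℝ (Kcone n) (fun lam => (f fun i => (lam i)⁻¹)⁻¹)) :
    ∀ lam ∈ Kcone n,
      (f lam) ^ 2 ≤ ∑ i, (lam i) ^ 2 * fderiv ℝ f lam (Pi.single i 1) :=
  sum_sq_partials_ge_f_sq_general n f hdiff hpos hhom hnorm hdualconc
end
end

section
/- Let n ≥ 1, let g̃ and h̃ be real symmetric n×n matrices, and let u > 0 and w ≠ 0 be real numbers. Set g = u^{−2} g̃ and h = u^{−1} h̃ + (u² w)^{−1} g̃. Then for every κ ∈ ℝ, det(h − κ g) = u^{−n} det(h̃ − κ̃ g̃), where κ̃ = (κ − 1/w)/u. In particular, if g̃ is positive definite, then κ is a generalized eigenvalue of the pair (h, g) if and only if (κ − 1/w)/u is a generalized eigenvalue of (h̃, g̃); i.e., the de Sitter principal curvatures κᵢ of a spacelike graph and its Minkowski principal curvatures κ̃ᵢ are related by κᵢ = u κ̃ᵢ + 1/w. -/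
noncomputable section

/-! The conformal factor `u⁻²` of the de Sitter metric and the umbilic term `g̃ / (u² w)` of
its second fundamental form combine into a single scalar multiple of the Minkowski pencil:
`h − κ g = u⁻¹ (h̃ − κ̃ g̃)`. Taking determinants gives the factor `u⁻ⁿ`, which does not vanish. -/

theorem smul_add_smul_sub_smul_smul_eq_smul_sub_smul {K M : Type*} [Field K] [AddCommGroup M]
    [Module K M] (X Y : M) {u : K} (hu : u ≠ 0) (w κ : K) :
    u⁻¹ • X + (u ^ 2 * w)⁻¹ • Y - κ • (u ^ 2)⁻¹ • Y = u⁻¹ • (X - ((κ - 1 / w) / u) • Y) := by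
  have hcoeff : (u ^ 2 * w)⁻¹ - κ * (u ^ 2)⁻¹ = -(u⁻¹ * ((κ - 1 / w) / u)) := by
    field_simp
    ring
  rw [smul_sub, smul_smul u⁻¹, add_sub_assoc, smul_smul κ, ← sub_smul, hcoeff, neg_smul,
    ← sub_eq_add_neg]

theorem deSitter_minkowski_curvature_relation_general
    (n : ℕ) (gt ht : Matrix (Fin n) (Fin n) ℝ)
    (u w : ℝ) (hu : 0 < u)
    (g h : Matrix (Fin n) (Fin n) ℝ)
    (hg : g = (u ^ 2)⁻¹ • gt)
    (hh : h = u⁻¹ • ht + (u ^ 2 * w)⁻¹ • gt) :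
    ∀ κ : ℝ,
      (h - κ • g).det = (u ^ n)⁻¹ * (ht - ((κ - 1 / w) / u) • gt).det ∧
      (gt.PosDef →
        ((h - κ • g).det = 0 ↔ (ht - ((κ - 1 / w) / u) • gt).det = 0)) := by
  intro κ
  have hdet : (h - κ • g).det = (u ^ n)⁻¹ * (ht - ((κ - 1 / w) / u) • gt).det := by
    rw [hg, hh, smul_add_smul_sub_smul_smul_eq_smul_sub_smul ht gt hu.ne', Matrix.det_smul,
      Fintype.card_fin, inv_pow]
  refine ⟨hdet, fun _ => ?_⟩
  rw [hdet]
  exact mul_eq_zero_iff_left (inv_ne_zero (pow_ne_zero n hu.ne'))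

/-- relation (1.24): comparison of the characteristic equations of
the de Sitter and Minkowski fundamental forms of a spacelike graph:
`det(h − κ g) = u^{−n} det(h̃ − κ̃ g̃)` with `κ̃ = (κ − 1/w)/u`; in particular for
positive definite `g̃`, the generalized eigenvalues are related by `κ = u κ̃ + 1/w`. -/
theorem deSitter_minkowski_curvature_relation
    (n : ℕ) (hn : 1 ≤ n) (gt ht : Matrix (Fin n) (Fin n) ℝ)
    (hgt : gt.IsSymm) (hht : ht.IsSymm)
    (u w : ℝ) (hu : 0 < u) (hw : w ≠ 0)
    (g h : Matrix (Fin n) (Fin n) ℝ)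
    (hg : g = (u ^ 2)⁻¹ • gt)
    (hh : h = u⁻¹ • ht + (u ^ 2 * w)⁻¹ • gt) :
    ∀ κ : ℝ,
      (h - κ • g).det = (u ^ n)⁻¹ * (ht - ((κ - 1 / w) / u) • gt).det ∧
      (gt.PosDef →
        ((h - κ • g).det = 0 ↔ (ht - ((κ - 1 / w) / u) • gt).det = 0)) :=
  deSitter_minkowski_curvature_relation_general n gt ht u w hu g h hg hh

end
end

section
/- Let n ≥ 1, let Ω ⊂ ℝⁿ be a bounded open set, let ε > 0 and σ > 1, and let f : K → ℝ be symmetric under permutations with ∂f/∂λᵢ > 0 on K for each i and f(1,…,1) = 1, where K is the open positive cone. Let u ∈ C⁰(Ω̄) ∩ C²(Ω) be admissible on Ω with f(κ[u](x)) = σ for every x ∈ Ω and u = ε on ∂Ω. Then u ≥ ε throughout Ω. -/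
open scoped BigOperators Classical
open Filter

noncomputable section

/-! At an interior minimum `x₀` of `u` the gradient vanishes, so `γ[u] = I`, `w = 1` and
`A[u] = I - u D²u`; since `D²u(x₀) ≥ 0` and `u > 0`, every de Sitter curvature lies in `(0, 1]`.
As `f` increases in each variable on the convex cone `K`, `f(κ) ≤ f(1, …, 1) = 1 < σ`,
contradicting the equation. Hence the minimum of `u` over the compact set `Ω̄` is attained on
`∂Ω`, where `u = ε`. -/

open Matrix

theorem IsLocalMin.deriv_deriv_nonneg {f : ℝ → ℝ} {a : ℝ} (h : IsLocalMin f a)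
    (hc : ContinuousAt f a) : 0 ≤ deriv (deriv f) a := by
  by_contra! hneg
  have hmax : IsLocalMax f a := isLocalMax_of_deriv_deriv_neg hneg h.deriv_eq_zero hc
  have hconst : f =ᶠ[nhds a] fun _ => f a := by
    filter_upwards [h, hmax] with x hmin hmax using le_antisymm hmax hmin
  have hzero : deriv (deriv f) a = 0 := by
    rw [hconst.deriv.deriv_eq]
    simp
  exact hneg.ne hzero

theorem IsLocalMin.fderiv_fderiv_apply_self_nonneg {E : Type*} [NormedAddCommGroup E]
    [NormedSpace ℝ E] {u : E → ℝ} {a : E} (h : IsLocalMin u a) (hu : ContDiffAt ℝ 2 u a)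
    (v : E) : 0 ≤ fderiv ℝ (fderiv ℝ u) a v v := by
  set line : ℝ → E := fun t => a + t • v
  have hline : ∀ t, HasDerivAt line v t := fun t => by
    simpa only [id, one_smul] using ((hasDerivAt_id t).smul_const v).const_add a
  have hline0 : line 0 = a := by simp [line]
  have hlim : Tendsto line (nhds 0) (nhds a) := hline0 ▸ (hline 0).continuousAt.tendsto
  have hderiv : deriv (u ∘ line) =ᶠ[nhds 0] fun t => fderiv ℝ u (line t) v := by
    filter_upwards [hlim.eventually (hu.eventually (by simp))] with t ht
    exact ((ht.differentiableAt two_ne_zero).hasFDerivAt.comp_hasDerivAt t (hline t)).deriv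
  have hderiv2 : HasDerivAt (fun t => fderiv ℝ u (line t) v) (fderiv ℝ (fderiv ℝ u) a v v) 0 := by
    have hD2 : HasFDerivAt (fderiv ℝ u) (fderiv ℝ (fderiv ℝ u) a) (line 0) :=
      hline0 ▸ ((hu.fderiv_right (m := 1) (by norm_num)).differentiableAt one_ne_zero).hasFDerivAt
    simpa using (hD2.comp_hasDerivAt 0 (hline 0)).clm_apply (hasDerivAt_const 0 v)
  have hmin : IsLocalMin (u ∘ line) 0 := by
    simpa [IsLocalMin, IsMinFilter, Function.comp, hline0] using hlim.eventually h
  have hnonneg :=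
    hmin.deriv_deriv_nonneg (hu.continuousAt.comp_of_eq (hline 0).continuousAt hline0)
  rwa [hderiv.deriv_eq, hderiv2.deriv] at hnonneg

theorem Matrix.IsHermitian.eigenvalues_le_one_of_one_sub_smul {ι : Type*} [Fintype ι]
    [DecidableEq ι] {H : Matrix ι ι ℝ} {c : ℝ} (hc : 0 ≤ c) (hH : ∀ v, 0 ≤ v ⬝ᵥ H *ᵥ v)
    (hA : (1 - c • H).IsHermitian) (i : ι) : hA.eigenvalues i ≤ 1 := by
  rw [hA.eigenvalues_eq]
  set v := hA.eigenvectorBasis i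
  have hunit : (v : ι → ℝ) ⬝ᵥ v = 1 := by
    have h := real_inner_self_eq_norm_sq v
    rw [hA.eigenvectorBasis.orthonormal.1 i, EuclideanSpace.inner_eq_star_dotProduct] at h
    simpa using h
  simp only [star_trivial, RCLike.re_to_real, sub_mulVec, one_mulVec, smul_mulVec, dotProduct_sub,
    dotProduct_smul, smul_eq_mul, hunit]
  linarith [mul_nonneg hc (hH v)]

theorem monotoneOn_of_fderiv_single_pos {ι : Type*} [Fintype ι] [DecidableEq ι]
    {f : (ι → ℝ) → ℝ} {s : Set (ι → ℝ)} (hs : Convex ℝ s)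
    (hf : ∀ x ∈ s, ∀ i, 0 < fderiv ℝ f x (Pi.single i 1)) : MonotoneOn f s := by
  intro a ha b hb hab
  rcases isEmpty_or_nonempty ι with hι | ⟨⟨i₀⟩⟩
  · exact (congrArg f (Subsingleton.elim a b)).le
  have hdiff : ∀ x ∈ s, HasFDerivWithinAt f (fderiv ℝ f x) s x := fun x hx => by
    refine DifferentiableAt.hasFDerivAt ?_ |>.hasFDerivWithinAt
    -- `fderiv` is junk `0` off the differentiability locus, so positivity forces differentiability.
    by_contra hnd
    simpa [fderiv_zero_of_not_differentiableAt hnd] using hf x hx i₀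
  obtain ⟨z, hz, hmvt⟩ := domain_mvt hdiff hs ha hb
  have hzs : z ∈ s := hs.segment_subset ha hb hz
  rw [← sub_nonneg, hmvt, ← Finset.univ_sum_single (b - a)]
  simp only [map_sum]
  refine Finset.sum_nonneg fun i _ => ?_
  rw [← mul_one ((b - a) i), ← smul_eq_mul, Pi.single_smul', map_smul, smul_eq_mul]
  exact mul_nonneg (sub_nonneg.2 (hab i)) (hf z hzs i).le

theorem convex_Kcone (n : ℕ) : Convex ℝ (Kcone n) := by
  simpa [Kcone, Set.pi] using convex_pi (s := Set.univ) fun (_ : Fin n) _ => convex_Ioi (0 : ℝ)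

theorem dotProduct_hess_mulVec {n : ℕ} (u : Euc n → ℝ) (x : Euc n) (v : Fin n → ℝ) :
    v ⬝ᵥ hess u x *ᵥ v = fderiv ℝ (fderiv ℝ u) x (WithLp.toLp 2 v) (WithLp.toLp 2 v) := by
  have hv : WithLp.toLp 2 v = ∑ i, v i • EuclideanSpace.single i (1 : ℝ) := by
    ext j; simp [Pi.single_apply]
  simp only [hv, map_sum, map_smul, _root_.sum_apply, _root_.smul_apply,
    smul_eq_mul, hess, iteratedFDeriv_two_apply, dotProduct, mulVec, of_apply, Finset.mul_sum]
  rw [Finset.sum_comm]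
  refine Finset.sum_congr rfl fun i _ => Finset.sum_congr rfl fun j _ => ?_
  simp only [cons_val_zero, cons_val_one]
  ring

theorem AM_eq_of_fderiv_eq_zero {n : ℕ} {u : Euc n → ℝ} {x : Euc n} (h : fderiv ℝ u x = 0) :
    AM u x = 1 - u x • hess u x := by
  have hgrad : grad u x = 0 := by ext i; simp [grad, h]
  have hgamma : gammaM u x = 1 := by ext i j; simp [gammaM, hgrad]
  simp [AM, wF, gradSq, hgrad, hgamma]

theorem curv_mem_Kcone {n : ℕ} {u : Euc n → ℝ} {x : Euc n} (h : (AM u x).PosDef) :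
    curv u x ∈ Kcone n := by
  intro i
  simp only [curv, eigs, dif_pos h.isHermitian]
  exact h.eigenvalues_pos i

theorem curv_le_one_of_isLocalMin {n : ℕ} {u : Euc n → ℝ} {x : Euc n} (hmin : IsLocalMin u x)
    (hu : ContDiffAt ℝ 2 u x) (hpos : 0 < u x) (hA : (AM u x).IsHermitian) (i : Fin n) :
    curv u x i ≤ 1 := by
  have hAM := AM_eq_of_fderiv_eq_zero hmin.fderiv_eq_zero
  have hA' : (1 - u x • hess u x).IsHermitian := hAM ▸ hA
  have hcurv : curv u x = hA'.eigenvalues := by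
    rw [curv, hAM, eigs, dif_pos hA']
  rw [hcurv]
  refine hA'.eigenvalues_le_one_of_one_sub_smul hpos.le (fun v => ?_) i
  rw [dotProduct_hess_mulVec]
  exact hmin.fderiv_fderiv_apply_self_nonneg hu _

theorem solution_ge_boundary_value_general
    (n : ℕ) (Ω : Set (Euc n)) (hΩo : IsOpen Ω)
    (hΩb : Bornology.IsBounded Ω)
    (ε : ℝ) (σ : ℝ) (hσ : 1 < σ)
    (f : (Fin n → ℝ) → ℝ)
    (hfmono : ∀ lam ∈ Kcone n, ∀ i, 0 < fderiv ℝ f lam (Pi.single i 1))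
    (hfnorm : f (fun _ => 1) = 1)
    (u : Euc n → ℝ)
    (hucont : ContinuousOn u (closure Ω))
    (hu2 : ContDiffOn ℝ 2 u Ω)
    (hadm : Admissible Ω u)
    (hfeq : ∀ x ∈ Ω, f (curv u x) = σ)
    (hbd : ∀ x ∈ frontier Ω, u x = ε) :
    ∀ x ∈ Ω, ε ≤ u x := by
  intro x hx
  obtain ⟨x₀, hx₀, hmin⟩ :=
    hΩb.isCompact_closure.exists_isMinOn ⟨x, subset_closure hx⟩ hucont
  refine le_trans ?_ (hmin (subset_closure hx))
  by_cases hx₀Ω : x₀ ∈ Ω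
  · exfalso
    have hloc : IsLocalMin u x₀ :=
      hmin.isLocalMin (mem_of_superset (hΩo.mem_nhds hx₀Ω) subset_closure)
    obtain ⟨hpos, -, hPD⟩ := hadm x₀ hx₀Ω
    have hκ_le_one : ∀ i, curv u x₀ i ≤ 1 :=
      curv_le_one_of_isLocalMin hloc (hu2.contDiffAt (hΩo.mem_nhds hx₀Ω)) hpos hPD.isHermitian
    have hf_le_one : f (curv u x₀) ≤ f (fun _ => 1) :=
      monotoneOn_of_fderiv_single_pos (convex_Kcone n) hfmono (curv_mem_Kcone hPD)
        (fun _ => one_pos) hκ_le_one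
    linarith [hfeq x₀ hx₀Ω]
  · exact (hbd x₀ (hΩo.frontier_eq ▸ ⟨hx₀, hx₀Ω⟩)).ge

/-- Lemma 4.1(i), graph form: an admissible solution of
`f(κ[u]) = σ > 1` with boundary values `ε` cannot dip below the plane `x_{n+1} = ε`. -/
theorem solution_ge_boundary_value
    (n : ℕ) (hn : 1 ≤ n) (Ω : Set (Euc n)) (hΩo : IsOpen Ω)
    (hΩb : Bornology.IsBounded Ω)
    (ε : ℝ) (hε : 0 < ε) (σ : ℝ) (hσ : 1 < σ)
    (f : (Fin n → ℝ) → ℝ)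
    (hfsymm : ∀ lam ∈ Kcone n, ∀ π : Equiv.Perm (Fin n), f (lam ∘ π) = f lam)
    (hfmono : ∀ lam ∈ Kcone n, ∀ i, 0 < fderiv ℝ f lam (Pi.single i 1))
    (hfnorm : f (fun _ => 1) = 1)
    (u : Euc n → ℝ)
    (hucont : ContinuousOn u (closure Ω))
    (hu2 : ContDiffOn ℝ 2 u Ω)
    (hadm : Admissible Ω u)
    (hfeq : ∀ x ∈ Ω, f (curv u x) = σ)
    (hbd : ∀ x ∈ frontier Ω, u x = ε) :
    ∀ x ∈ Ω, ε ≤ u x :=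
  solution_ge_boundary_value_general n Ω hΩo hΩb ε σ hσ f hfmono hfnorm u hucont hu2 hadm hfeq hbd
end
end
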